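/- Let w1, w2 be words over an alphabet Y and suppose a1 w1 b1 = a2 w2 b2 for words a1, b1, a2, b2 (two occurrences of w1 and w2 inside a common word W). Then there exists an ambiguity (p1⊗q1, p2⊗q2) of w1 and w2 — of overlap, inclusion, or external type — and words l, r such that l p1 w1 q1 r = l p2 w2 q2 r = W, l p_i = a_i and q_i r = b_i for i = 1, 2. -/
import Mathlib


/-- `WordAmb a b c d p q` says that `(a ⊗ b, c ⊗ d, p, q)` is an ambiguity of
the words `p` and `q`: an overlap ambiguity, an inclusion ambiguity, or an
external ambiguity.  In all cases `a * p * b = c * q * d`. -/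
inductive WordAmb {Y : Type} :
    FreeMonoid Y → FreeMonoid Y → FreeMonoid Y → FreeMonoid Y →
    FreeMonoid Y → FreeMonoid Y → Prop
  | overlap₁ (a b p q : FreeMonoid Y) (h : a * p = q * b)
      (ha : a ≠ 1) (hb : b ≠ 1) (hla : a.length < q.length) (hlb : b.length < p.length) :
      WordAmb a 1 1 b p q
  | overlap₂ (a b p q : FreeMonoid Y) (h : p * a = b * q)
      (ha : a ≠ 1) (hb : b ≠ 1) (hla : a.length < q.length) (hlb : b.length < p.length) :
      WordAmb 1 a b 1 p q
  | inclusion₁ (a b p q : FreeMonoid Y) (h : p = a * q * b) :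
      WordAmb 1 1 a b p q
  | inclusion₂ (a b p q : FreeMonoid Y) (h : a * p * b = q) :
      WordAmb a b 1 1 p q
  | external₁ (m p q : FreeMonoid Y) :
      WordAmb 1 (m * q) (p * m) 1 p q
  | external₂ (m p q : FreeMonoid Y) :
      WordAmb (q * m) 1 1 (m * p) p q

private lemma FreeMonoid.split {Y : Type} {x y z w : FreeMonoid Y} (h : x * y = z * w) :
    (∃ t : FreeMonoid Y, z = x * t ∧ y = t * w) ∨
    (∃ t : FreeMonoid Y, x = z * t ∧ w = t * y) :=
  List.append_eq_append_iff.mp h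

private lemma FreeMonoid.len_pos {Y : Type} {u : FreeMonoid Y} (h : u ≠ 1) :
    0 < u.length :=
  Nat.pos_of_ne_zero (fun h0 => h (FreeMonoid.length_eq_zero.mp h0))

/-- If `a₁ w₁ b₁ = a₂ w₂ b₂ = W` are two occurrences of the
words `w₁` and `w₂` inside a common word `W`, then there exist an ambiguity
`(p₁ ⊗ q₁, p₂ ⊗ q₂)` of `w₁` and `w₂` — of overlap, inclusion or external
type — and words `l`, `r` such that `l p₁ w₁ q₁ r = l p₂ w₂ q₂ r = W`,
`l pᵢ = aᵢ` and `qᵢ r = bᵢ` for `i = 1, 2`. -/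
theorem two_occurrences_give_ambiguity {Y : Type}
    (w₁ w₂ a₁ b₁ a₂ b₂ W : FreeMonoid Y)
    (h₁ : a₁ * w₁ * b₁ = W) (h₂ : a₂ * w₂ * b₂ = W) :
    ∃ p₁ q₁ p₂ q₂ l ρ : FreeMonoid Y,
      WordAmb p₁ q₁ p₂ q₂ w₁ w₂ ∧
      l * p₁ * w₁ * q₁ * ρ = W ∧ l * p₂ * w₂ * q₂ * ρ = W ∧
      l * p₁ = a₁ ∧ q₁ * ρ = b₁ ∧ l * p₂ = a₂ ∧ q₂ * ρ = b₂ := by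
  subst h₁
  rw [mul_assoc, mul_assoc] at h₂
  rcases FreeMonoid.split h₂ with ⟨t, ht, hw⟩ | ⟨t, ht, hw⟩
  · -- a₁ = a₂ * t, w₂ * b₂ = t * (w₁ * b₁)
    subst ht
    rcases FreeMonoid.split hw with ⟨u, hu, hb⟩ | ⟨u, hu, hb⟩
    · -- t = w₂ * u, b₂ = u * (w₁ * b₁) : external₂
      subst hu; subst hb
      exact ⟨_, _, _, _, a₂, b₁, WordAmb.external₂ u w₁ w₂,
        by simp [mul_assoc], by simp [mul_assoc], by simp [mul_assoc],
        by simp [mul_assoc], by simp [mul_assoc], by simp [mul_assoc]⟩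
    · -- w₂ = t * u, w₁ * b₁ = u * b₂
      subst hu
      rcases FreeMonoid.split hb with ⟨v, hv, hb'⟩ | ⟨v, hv, hb'⟩
      · -- u = w₁ * v, b₁ = v * b₂ : inclusion₂
        subst hv; subst hb'
        exact ⟨_, _, _, _, a₂, b₂, WordAmb.inclusion₂ t v w₁ _ (by simp [mul_assoc]),
          by simp [mul_assoc], by simp [mul_assoc], by simp [mul_assoc],
          by simp [mul_assoc], by simp [mul_assoc], by simp [mul_assoc]⟩
      · -- w₁ = u * v, b₂ = v * b₁
        subst hv; subst hb'
        by_cases hu1 : u = 1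
        · subst hu1
          exact ⟨_, _, _, _, a₂, b₁, WordAmb.external₂ 1 _ _,
            by simp [mul_assoc], by simp [mul_assoc], by simp [mul_assoc],
            by simp [mul_assoc], by simp [mul_assoc], by simp [mul_assoc]⟩
        by_cases ht1 : t = 1
        · subst ht1
          exact ⟨_, _, _, _, a₂, b₁, WordAmb.inclusion₁ 1 v _ _ (by simp [mul_assoc]),
            by simp [mul_assoc], by simp [mul_assoc], by simp [mul_assoc],
            by simp [mul_assoc], by simp [mul_assoc], by simp [mul_assoc]⟩
        by_cases hv1 : v = 1
        · subst hv1
          exact ⟨_, _, _, _, a₂, b₁, WordAmb.inclusion₂ t 1 _ _ (by simp [mul_assoc]),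
            by simp [mul_assoc], by simp [mul_assoc], by simp [mul_assoc],
            by simp [mul_assoc], by simp [mul_assoc], by simp [mul_assoc]⟩
        · have hup := FreeMonoid.len_pos hu1
          exact ⟨_, _, _, _, a₂, b₁,
            WordAmb.overlap₁ t v _ _ (by simp [mul_assoc]) ht1 hv1
              (by simp [FreeMonoid.length_mul]; omega)
              (by simp [FreeMonoid.length_mul]; omega),
            by simp [mul_assoc], by simp [mul_assoc], by simp [mul_assoc],
            by simp [mul_assoc], by simp [mul_assoc], by simp [mul_assoc]⟩
  · -- a₂ = a₁ * t, w₁ * b₁ = t * (w₂ * b₂)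
    subst ht
    rcases FreeMonoid.split hw with ⟨u, hu, hb⟩ | ⟨u, hu, hb⟩
    · -- t = w₁ * u, b₁ = u * (w₂ * b₂) : external₁
      subst hu; subst hb
      exact ⟨_, _, _, _, a₁, b₂, WordAmb.external₁ u w₁ w₂,
        by simp [mul_assoc], by simp [mul_assoc], by simp [mul_assoc],
        by simp [mul_assoc], by simp [mul_assoc], by simp [mul_assoc]⟩
    · -- w₁ = t * u, w₂ * b₂ = u * b₁
      subst hu
      rcases FreeMonoid.split hb with ⟨v, hv, hb'⟩ | ⟨v, hv, hb'⟩
      · -- u = w₂ * v, b₂ = v * b₁ : inclusion₁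
        subst hv; subst hb'
        exact ⟨_, _, _, _, a₁, b₁, WordAmb.inclusion₁ t v _ w₂ (by simp [mul_assoc]),
          by simp [mul_assoc], by simp [mul_assoc], by simp [mul_assoc],
          by simp [mul_assoc], by simp [mul_assoc], by simp [mul_assoc]⟩
      · -- w₂ = u * v, b₁ = v * b₂
        subst hv; subst hb'
        by_cases hu1 : u = 1
        · subst hu1
          exact ⟨_, _, _, _, a₁, b₂, WordAmb.external₁ 1 _ _,
            by simp [mul_assoc], by simp [mul_assoc], by simp [mul_assoc],
            by simp [mul_assoc], by simp [mul_assoc], by simp [mul_assoc]⟩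
        by_cases ht1 : t = 1
        · subst ht1
          exact ⟨_, _, _, _, a₁, b₂, WordAmb.inclusion₂ 1 v _ _ (by simp [mul_assoc]),
            by simp [mul_assoc], by simp [mul_assoc], by simp [mul_assoc],
            by simp [mul_assoc], by simp [mul_assoc], by simp [mul_assoc]⟩
        by_cases hv1 : v = 1
        · subst hv1
          exact ⟨_, _, _, _, a₁, b₂, WordAmb.inclusion₁ t 1 _ _ (by simp [mul_assoc]),
            by simp [mul_assoc], by simp [mul_assoc], by simp [mul_assoc],
            by simp [mul_assoc], by simp [mul_assoc], by simp [mul_assoc]⟩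
        · have hup := FreeMonoid.len_pos hu1
          exact ⟨_, _, _, _, a₁, b₂,
            WordAmb.overlap₂ v t _ _ (by simp [mul_assoc]) hv1 ht1
              (by simp [FreeMonoid.length_mul]; omega)
              (by simp [FreeMonoid.length_mul]; omega),
            by simp [mul_assoc], by simp [mul_assoc], by simp [mul_assoc],
            by simp [mul_assoc], by simp [mul_assoc], by simp [mul_assoc]⟩
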